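/- Let ε ∈ ℝ and k₂ > 0. On any open interval I containing 0 on which the expression 1 + ε( s√(1 + k₂ s²) + arcsinh(√(k₂) s)/√(k₂) ) is positive, the function φ(s) := √( 1 + ε( s√(1 + k₂ s²) + arcsinh(√(k₂) s)/√(k₂) ) ) satisfies equation (E) with parameters (k₁, k₂, k₃) = (0, k₂, 0), i.e. s k₂ (φφ' − s φ'² − s φφ'') − (φ'² + φφ'') = 0 on I; moreover φ(0) = 1 and φ'(0) = ε. -/

import Mathlib

/-!
Write `φ = √g` with `g = 1 + ε G`. Then `φ φ' = g'/2` and `φ'² + φ φ'' = (φ φ')' = g''/2`, so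
equation (E) with `(k₁, k₂, k₃) = (0, k₂, 0)` becomes the linear relation `s k₂ g' = (1 + k₂ s²) g''`.
Since `G' = 2 √(1 + k₂ s²)`, the relation reduces to `(√(1 + k₂ s²))' = k₂ s / √(1 + k₂ s²)`.
-/

/-- Equation (E) with parameters `k₁ k₂ k₃` for a real function `φ` at the point `s`:
`s(k₂ − k₃ s²)(φφ' − s φ'² − s φφ'') − (φ'² + φφ'') + k₁ φ(φ − s φ') = 0`. -/
def eqE (k₁ k₂ k₃ : ℝ) (φ : ℝ → ℝ) (s : ℝ) : Prop :=
  s * (k₂ - k₃ * s ^ 2) *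
      (φ s * deriv φ s - s * (deriv φ s) ^ 2 - s * φ s * deriv (deriv φ) s) -
    ((deriv φ s) ^ 2 + φ s * deriv (deriv φ) s) +
    k₁ * φ s * (φ s - s * deriv φ s) = 0

open Real Filter Topology

theorem hasDerivAt_sqrt_one_add_mul_sq {k s : ℝ} (h : 1 + k * s ^ 2 ≠ 0) :
    HasDerivAt (fun t => √(1 + k * t ^ 2)) (k * s / √(1 + k * s ^ 2)) s := by
  have hquad : HasDerivAt (fun t : ℝ => 1 + k * t ^ 2) (k * (2 * s)) s := by
    simpa using ((hasDerivAt_pow 2 s).const_mul k).const_add 1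
  convert hquad.sqrt h using 1
  ring

theorem hasDerivAt_mul_sqrt_add_arsinh_div_sqrt {k : ℝ} (hk : 0 < k) (s : ℝ) :
    HasDerivAt (fun t => t * √(1 + k * t ^ 2) + arsinh (√k * t) / √k)
      (2 * √(1 + k * s ^ 2)) s := by
  have hA : 0 < 1 + k * s ^ 2 := by positivity
  have harsinh : HasDerivAt (fun t => arsinh (√k * t)) ((√(1 + k * s ^ 2))⁻¹ * √k) s := by
    have := (hasDerivAt_arsinh (√k * s)).comp s ((hasDerivAt_id s).const_mul √k)
    rwa [mul_pow, sq_sqrt hk.le, mul_one] at this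
  have hprod : HasDerivAt (fun t => t * √(1 + k * t ^ 2))
      (1 * √(1 + k * s ^ 2) + s * (k * s / √(1 + k * s ^ 2))) s :=
    (hasDerivAt_id' s).mul (hasDerivAt_sqrt_one_add_mul_sq hA.ne')
  refine (hprod.fun_add (harsinh.div_const √k)).congr_deriv ?_
  field_simp
  rw [sq_sqrt hA.le]
  ring

theorem eqE_zero_zero_sqrt_iff {g g' : ℝ → ℝ} {s g'' : ℝ} (k₂ : ℝ)
    (hg : ∀ᶠ t in 𝓝 s, HasDerivAt g (g' t) t)
    (hg' : HasDerivAt g' g'' s) (hpos : 0 < g s) :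
    eqE 0 k₂ 0 (fun t => √(g t)) s ↔ s * k₂ * g' s = (1 + k₂ * s ^ 2) * g'' := by
  have hgs := hg.self_of_nhds
  have hderiv : deriv (fun t => √(g t)) =ᶠ[𝓝 s] fun t => g' t / (2 * √(g t)) := by
    filter_upwards [hg, hgs.continuousAt.eventually (lt_mem_nhds hpos)] with t ht htpos
    exact (ht.sqrt htpos.ne').deriv
  have hsqrt_pos : 0 < √(g s) := sqrt_pos.2 hpos
  have hderiv2 : HasDerivAt (deriv fun t => √(g t))
      ((g'' * (2 * √(g s)) - g' s * (2 * (g' s / (2 * √(g s))))) / (2 * √(g s)) ^ 2) s :=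
    (hg'.div ((hgs.sqrt hpos.ne').const_mul 2) (by positivity)).congr_of_eventuallyEq hderiv
  have hmul : √(g s) * deriv (fun t => √(g t)) s = g' s / 2 := by
    rw [hderiv.eq_of_nhds]
    field_simp
  have hmul_deriv : deriv (fun t => √(g t)) s ^ 2 +
      √(g s) * deriv (deriv fun t => √(g t)) s = g'' / 2 := by
    rw [hderiv2.deriv, hderiv.eq_of_nhds]
    field_simp
    ring
  unfold eqE
  constructor <;> intro h
  · linear_combination 2 * h - 2 * s * k₂ * hmul + 2 * (1 + k₂ * s ^ 2) * hmul_deriv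
  · linear_combination h / 2 + s * k₂ * hmul - (1 + k₂ * s ^ 2) * hmul_deriv

theorem stmt14_general (ε k₂ : ℝ) (hk₂ : 0 < k₂) (a b : ℝ)
    (hpos : ∀ s ∈ Set.Ioo a b,
      0 < 1 + ε * (s * Real.sqrt (1 + k₂ * s ^ 2) +
        Real.arsinh (Real.sqrt k₂ * s) / Real.sqrt k₂)) :
    (∀ s ∈ Set.Ioo a b,
      eqE 0 k₂ 0
        (fun t => Real.sqrt (1 + ε * (t * Real.sqrt (1 + k₂ * t ^ 2) +
          Real.arsinh (Real.sqrt k₂ * t) / Real.sqrt k₂))) s) ∧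
    (fun t => Real.sqrt (1 + ε * (t * Real.sqrt (1 + k₂ * t ^ 2) +
      Real.arsinh (Real.sqrt k₂ * t) / Real.sqrt k₂))) 0 = 1 ∧
    deriv (fun t => Real.sqrt (1 + ε * (t * Real.sqrt (1 + k₂ * t ^ 2) +
      Real.arsinh (Real.sqrt k₂ * t) / Real.sqrt k₂))) 0 = ε := by
  have hg (s : ℝ) : HasDerivAt (fun t => 1 + ε * (t * √(1 + k₂ * t ^ 2) + arsinh (√k₂ * t) / √k₂))
      (ε * (2 * √(1 + k₂ * s ^ 2))) s :=
    ((hasDerivAt_mul_sqrt_add_arsinh_div_sqrt hk₂ s).const_mul ε).const_add 1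
  refine ⟨fun s hs => ?_, by simp, ?_⟩
  · have hA : 0 < 1 + k₂ * s ^ 2 := by positivity
    rw [eqE_zero_zero_sqrt_iff k₂ (.of_forall hg)
      (((hasDerivAt_sqrt_one_add_mul_sq hA.ne').const_mul 2).const_mul ε) (hpos s hs)]
    field_simp
    rw [mul_comm (s ^ 2), sq_sqrt hA.le]
  · convert ((hg 0).sqrt (by simp)).deriv using 1
    simp

theorem stmt14 (ε k₂ : ℝ) (hk₂ : 0 < k₂) (a b : ℝ) (ha : a < 0) (hb : 0 < b)
    (hpos : ∀ s ∈ Set.Ioo a b,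
      0 < 1 + ε * (s * Real.sqrt (1 + k₂ * s ^ 2) +
        Real.arsinh (Real.sqrt k₂ * s) / Real.sqrt k₂)) :
    (∀ s ∈ Set.Ioo a b,
      eqE 0 k₂ 0
        (fun t => Real.sqrt (1 + ε * (t * Real.sqrt (1 + k₂ * t ^ 2) +
          Real.arsinh (Real.sqrt k₂ * t) / Real.sqrt k₂))) s) ∧
    (fun t => Real.sqrt (1 + ε * (t * Real.sqrt (1 + k₂ * t ^ 2) +
      Real.arsinh (Real.sqrt k₂ * t) / Real.sqrt k₂))) 0 = 1 ∧
    deriv (fun t => Real.sqrt (1 + ε * (t * Real.sqrt (1 + k₂ * t ^ 2) +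
      Real.arsinh (Real.sqrt k₂ * t) / Real.sqrt k₂))) 0 = ε :=
  stmt14_general ε k₂ hk₂ a b hpos
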